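/- arXiv:2009.13445 — 2 statements merged into one kernel-verified Lean document; each statement's English description precedes it below -/
import Mathlib

section
/- There is a constant C > 0 such that for any sufficiently regular f on Ω = 𝕋 × ℝ with oscillation f̃ = f − f̄ (where f̄ is the horizontal average), and any g, h with g, ∂₂g, h ∈ L²(Ω), one has |∫_Ω f̃ g h dx| ≤ C ‖f̃‖_{L²}^{1/2} ‖∂₁f̃‖_{L²}^{1/2} ‖g‖_{L²}^{1/2} ‖∂₂g‖_{L²}^{1/2} ‖h‖_{L²}. -/
open MeasureTheory Real

noncomputable def pd1 (f : ℝ × ℝ → ℝ) : ℝ × ℝ → ℝ := fun p => deriv (fun x => f (x, p.2)) p.1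
noncomputable def pd2 (f : ℝ × ℝ → ℝ) : ℝ × ℝ → ℝ := fun p => deriv (fun y => f (p.1, y)) p.2
noncomputable def havg (f : ℝ × ℝ → ℝ) : ℝ → ℝ := fun y => ∫ x in (0:ℝ)..1, f (x, y)
noncomputable def osc (f : ℝ × ℝ → ℝ) : ℝ × ℝ → ℝ := fun p => f p - havg f p.2
noncomputable def μΩ : Measure (ℝ × ℝ) :=
  ((volume : Measure ℝ).restrict (Set.Ioc (0:ℝ) 1)).prod (volume : Measure ℝ)
/-- Periodicity with period 1 in the first (horizontal) variable: `f` lives on `𝕋 × ℝ`. -/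
def Per (f : ℝ × ℝ → ℝ) : Prop := ∀ x y, f (x + 1, y) = f (x, y)

/-!
Two one-dimensional Agmon inequalities `‖u‖_∞² ≤ 2 ‖u‖₂ ‖u'‖₂` drive the estimate: on the
circle for the mean-zero slices `x ↦ f̃ (x, y)` (the mean-value theorem gives a zero of the slice,
from which the fundamental theorem of calculus integrates `(u²)' = 2 u u'` over at most one
period), and on the line for the slices `y ↦ g (x, y)` (here `u²` vanishes at infinity).
Bounding `f̃` by its horizontal supremum and `g` by its vertical supremum, Cauchy–Schwarz in `x`
and then in `y` (Tonelli) gives `∫ |f̃ g h| ≤ ‖sup_x f̃‖_{L²_y} ‖sup_y g‖_{L²_x} ‖h‖₂`, and a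
further Cauchy–Schwarz controls the two mixed norms by `(2 ‖f̃‖₂ ‖∂₁f̃‖₂)^{1/2}` and
`(2 ‖g‖₂ ‖∂₂g‖₂)^{1/2}`.
-/

open Set
open scoped ENNReal

section CauchySchwarz

variable {α : Type*} [MeasurableSpace α] {μ : Measure α}

theorem eLpNorm_two_eq_rpow_lintegral {ε : Type*} [ENorm ε] (f : α → ε) :
    eLpNorm f 2 μ = (∫⁻ a, ‖f a‖ₑ ^ 2 ∂μ) ^ (1/2 : ℝ) := by
  simp [eLpNorm_eq_lintegral_rpow_enorm_toReal]

theorem lintegral_mul_le_eLpNorm_two_mul_eLpNorm_two {f g : α → ℝ≥0∞}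
    (hf : AEMeasurable f μ) (hg : AEMeasurable g μ) :
    ∫⁻ a, f a * g a ∂μ ≤ eLpNorm f 2 μ * eLpNorm g 2 μ := by
  simpa [eLpNorm_eq_lintegral_rpow_enorm_toReal] using
    ENNReal.lintegral_mul_le_Lp_mul_Lq μ Real.HolderConjugate.two_two hf hg

theorem eLpNorm_two_le_of_enorm_sq_le {u : α → ℝ} {ψ : α → ℝ≥0∞}
    (h : ∀ᵐ x ∂μ, ‖u x‖ₑ ^ 2 ≤ ψ x) : eLpNorm u 2 μ ≤ (∫⁻ x, ψ x ∂μ) ^ (1/2 : ℝ) := by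
  rw [eLpNorm_two_eq_rpow_lintegral]
  gcongr ?_ ^ _
  exact lintegral_mono_ae h

theorem lintegral_enorm_mul_le_eLpNorm_two_mul_eLpNorm_two {u v : α → ℝ}
    (hu : AEStronglyMeasurable u μ) (hv : AEStronglyMeasurable v μ) :
    ∫⁻ x, ‖u x * v x‖ₑ ∂μ ≤ eLpNorm u 2 μ * eLpNorm v 2 μ := by
  simpa only [enorm_mul, eLpNorm_enorm] using
    lintegral_mul_le_eLpNorm_two_mul_eLpNorm_two hu.enorm hv.enorm

theorem lintegral_enorm_mul_mul_le_of_enorm_sq_le {u v w : α → ℝ} {a : ℝ≥0∞}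
    (hv : AEStronglyMeasurable v μ) (hw : AEStronglyMeasurable w μ) (hu : ∀ x, ‖u x‖ₑ ^ 2 ≤ a) :
    ∫⁻ x, ‖u x * v x * w x‖ₑ ∂μ ≤ a ^ (1/2 : ℝ) * (eLpNorm v 2 μ * eLpNorm w 2 μ) := by
  calc ∫⁻ x, ‖u x * v x * w x‖ₑ ∂μ ≤ ∫⁻ x, a ^ (1/2 : ℝ) * ‖v x * w x‖ₑ ∂μ := by
        refine lintegral_mono fun x => ?_
        rw [mul_assoc, enorm_mul]
        gcongr
        rw [one_div, ENNReal.le_rpow_inv_iff two_pos, ENNReal.rpow_two]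
        exact hu x
    _ = a ^ (1/2 : ℝ) * ∫⁻ x, ‖v x * w x‖ₑ ∂μ :=
        lintegral_const_mul'' _ (hv.mul hw).enorm
    _ ≤ _ := by
        gcongr
        exact lintegral_enorm_mul_le_eLpNorm_two_mul_eLpNorm_two hv hw

theorem enorm_sq_le_two_mul_eLpNorm_mul_eLpNorm_of_sq_le {u v : α → ℝ}
    (hu : AEStronglyMeasurable u μ) (hv : AEStronglyMeasurable v μ) {a : ℝ}
    (h : a ^ 2 ≤ 2 * ∫ t, |u t * v t| ∂μ) :
    ‖a‖ₑ ^ 2 ≤ 2 * eLpNorm u 2 μ * eLpNorm v 2 μ := by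
  calc ‖a‖ₑ ^ 2 = ENNReal.ofReal (a ^ 2) := by
        rw [Real.enorm_eq_ofReal_abs, ← ENNReal.ofReal_pow (abs_nonneg a), sq_abs]
    _ ≤ ENNReal.ofReal (2 * ∫ t, |u t * v t| ∂μ) := ENNReal.ofReal_le_ofReal h
    _ = 2 * ‖∫ t, |u t * v t| ∂μ‖ₑ := by
        rw [ENNReal.ofReal_mul zero_le_two,
          Real.enorm_of_nonneg (integral_nonneg fun _ => abs_nonneg _)]
        norm_num
    _ ≤ 2 * ∫⁻ t, ‖u t * v t‖ₑ ∂μ := by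
        gcongr
        simpa using enorm_integral_le_lintegral_enorm (μ := μ) fun t => |u t * v t|
    _ ≤ 2 * eLpNorm u 2 μ * eLpNorm v 2 μ := by
        rw [mul_assoc]
        gcongr
        exact lintegral_enorm_mul_le_eLpNorm_two_mul_eLpNorm_two hu hv

end CauchySchwarz

section Agmon

theorem hasDerivAt_sq_of_differentiable {u : ℝ → ℝ} (hu : Differentiable ℝ u) (t : ℝ) :
    HasDerivAt (fun t => u t ^ 2) (2 * (u t * deriv u t)) t :=
  ((hu t).hasDerivAt.fun_pow 2).congr_deriv (by norm_num; ring)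

theorem sq_le_two_mul_integral_abs_mul_deriv_of_periodic {u : ℝ → ℝ} (hu : Differentiable ℝ u)
    (hper : Function.Periodic u 1) (hmean : ∫ t in (0:ℝ)..1, u t = 0)
    (hint : IntervalIntegrable (fun t => u t * deriv u t) volume 0 1) (x : ℝ) :
    u x ^ 2 ≤ 2 * ∫ t in Ioc 0 1, |u t * deriv u t| := by
  set v := fun t => u t * deriv u t
  have hv : Function.Periodic v 1 := fun t => by
    simp only [v, hper t, ← deriv_comp_add_const, hper.funext]
  have hint' (a b : ℝ) : IntervalIntegrable (fun t => 2 * v t) volume a b :=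
    (hv.intervalIntegrable₀ one_ne_zero hint a b).const_mul 2
  obtain ⟨x₀, -, hx₀⟩ := exists_eq_interval_average zero_ne_one hu.continuous.continuousOn
  rw [interval_average_eq_div, hmean, zero_div] at hx₀
  obtain ⟨y, hy, hxy⟩ := hper.exists_mem_Ico one_pos x x₀
  have hFTC : u y ^ 2 = ∫ t in x₀..y, 2 * v t := by
    rw [intervalIntegral.integral_eq_sub_of_hasDerivAt
      (fun t _ => hasDerivAt_sq_of_differentiable hu t) (hint' _ _), hx₀]
    ring
  calc u x ^ 2 = ∫ t in x₀..y, 2 * v t := by rw [hxy, hFTC]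
    _ ≤ ∫ t in x₀..y, |2 * v t| :=
      intervalIntegral.integral_mono_on hy.1 (hint' _ _) (hint' _ _).abs fun t _ => le_abs_self _
    _ ≤ ∫ t in x₀..x₀ + 1, |2 * v t| :=
      intervalIntegral.integral_mono_interval le_rfl hy.1 hy.2.le
        (.of_forall fun t => abs_nonneg _) (hint' _ _).abs
    _ = ∫ t in (0:ℝ)..1, |2 * v t| := by
      simpa using (hv.comp fun a => |2 * a|).intervalIntegral_add_eq x₀ 0
    _ = 2 * ∫ t in Ioc 0 1, |v t| := by
      simp [intervalIntegral.integral_of_le, abs_mul, integral_const_mul]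

theorem sq_le_two_mul_integral_abs_mul_deriv {w : ℝ → ℝ} (hw : Differentiable ℝ w)
    (hw2 : Integrable fun t => w t ^ 2) (hint : Integrable fun t => w t * deriv w t) (y : ℝ) :
    w y ^ 2 ≤ 2 * ∫ t, |w t * deriv w t| := by
  have hderiv (t : ℝ) (_ : t ∈ Ici y) := hasDerivAt_sq_of_differentiable hw t
  have hint2 : IntegrableOn (fun t => 2 * (w t * deriv w t)) (Ioi y) :=
    (hint.const_mul 2).integrableOn
  have htail := integral_Ioi_of_hasDerivAt_of_tendsto' hderiv hint2
    (tendsto_zero_of_hasDerivAt_of_integrableOn_Ioi (fun t ht => hderiv t (mem_Ici_of_Ioi ht))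
      hint2 hw2.integrableOn)
  calc w y ^ 2 = -∫ t in Ioi y, 2 * (w t * deriv w t) := by rw [htail]; ring
    _ ≤ ∫ t in Ioi y, |2 * (w t * deriv w t)| :=
      (neg_le_abs _).trans abs_integral_le_integral_abs
    _ ≤ ∫ t, |2 * (w t * deriv w t)| :=
      setIntegral_le_integral (hint.const_mul 2).abs (.of_forall fun t => abs_nonneg _)
    _ = 2 * ∫ t, |w t * deriv w t| := by simp [abs_mul, integral_const_mul]

theorem enorm_sq_le_two_mul_eLpNorm_mul_eLpNorm_deriv_of_periodic {u : ℝ → ℝ}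
    (hu : Differentiable ℝ u) (hper : Function.Periodic u 1) (hmean : ∫ t in (0:ℝ)..1, u t = 0)
    (hu' : MemLp (deriv u) 2 (volume.restrict (Ioc 0 1))) (x : ℝ) :
    ‖u x‖ₑ ^ 2 ≤ 2 * eLpNorm u 2 (volume.restrict (Ioc 0 1)) *
      eLpNorm (deriv u) 2 (volume.restrict (Ioc 0 1)) := by
  have hint : IntervalIntegrable (fun t => u t * deriv u t) volume 0 1 :=
    ((intervalIntegrable_iff_integrableOn_Ioc_of_le zero_le_one).2
      (hu'.integrable one_le_two)).continuousOn_mul hu.continuous.continuousOn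
  exact enorm_sq_le_two_mul_eLpNorm_mul_eLpNorm_of_sq_le hu.continuous.aestronglyMeasurable hu'.1
    (sq_le_two_mul_integral_abs_mul_deriv_of_periodic hu hper hmean hint x)

theorem enorm_sq_le_two_mul_eLpNorm_mul_eLpNorm_deriv {w : ℝ → ℝ} (hw : Differentiable ℝ w)
    (hw2 : MemLp w 2) (hw' : MemLp (deriv w) 2) (y : ℝ) :
    ‖w y‖ₑ ^ 2 ≤ 2 * eLpNorm w 2 * eLpNorm (deriv w) 2 :=
  enorm_sq_le_two_mul_eLpNorm_mul_eLpNorm_of_sq_le hw2.1 hw'.1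
    (sq_le_two_mul_integral_abs_mul_deriv hw hw2.integrable_sq (hw2.integrable_mul hw') y)

end Agmon

section Slices

variable {α β E : Type*} [MeasurableSpace α] [MeasurableSpace β] [NormedAddCommGroup E]
  {μ : Measure α} {ν : Measure β} [SFinite μ] [SFinite ν] {p : ℝ≥0∞} {F : α × β → E}

theorem eLpNorm_eLpNorm_slice_left (hp₀ : p ≠ 0) (hp : p ≠ ∞)
    (hF : AEStronglyMeasurable F (μ.prod ν)) :
    eLpNorm (fun y => eLpNorm (fun x => F (x, y)) p μ) p ν = eLpNorm F p (μ.prod ν) := by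
  have hp' : 0 < p.toReal := ENNReal.toReal_pos hp₀ hp
  simp only [eLpNorm_eq_lintegral_rpow_enorm_toReal hp₀ hp, enorm_eq_self]
  rw [lintegral_prod_symm _ (hF.enorm.pow_const _)]
  congr 1
  refine lintegral_congr fun y => ?_
  rw [← ENNReal.rpow_mul, one_div_mul_cancel hp'.ne', ENNReal.rpow_one]

theorem eLpNorm_eLpNorm_slice_right (hp₀ : p ≠ 0) (hp : p ≠ ∞)
    (hF : AEStronglyMeasurable F (μ.prod ν)) :
    eLpNorm (fun x => eLpNorm (fun y => F (x, y)) p ν) p μ = eLpNorm F p (μ.prod ν) := by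
  rw [← eLpNorm_comp_measurePreserving hF Measure.measurePreserving_swap]
  exact eLpNorm_eLpNorm_slice_left (F := F ∘ Prod.swap) hp₀ hp
    (hF.comp_measurePreserving Measure.measurePreserving_swap)

theorem aemeasurable_eLpNorm_slice_left (hp₀ : p ≠ 0) (hp : p ≠ ∞)
    (hF : AEStronglyMeasurable F (μ.prod ν)) :
    AEMeasurable (fun y => eLpNorm (fun x => F (x, y)) p μ) ν := by
  simp only [eLpNorm_eq_lintegral_rpow_enorm_toReal hp₀ hp]
  exact ((hF.enorm.pow_const _).lintegral_prod_left').pow_const _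

theorem aemeasurable_eLpNorm_slice_right (hp₀ : p ≠ 0) (hp : p ≠ ∞)
    (hF : AEStronglyMeasurable F (μ.prod ν)) :
    AEMeasurable (fun x => eLpNorm (fun y => F (x, y)) p ν) μ :=
  aemeasurable_eLpNorm_slice_left (F := F ∘ Prod.swap) hp₀ hp
    (hF.comp_measurePreserving Measure.measurePreserving_swap)

theorem ae_eLpNorm_slice_left_lt_top (hp₀ : p ≠ 0) (hp : p ≠ ∞) (hF : MemLp F p (μ.prod ν)) :
    ∀ᵐ y ∂ν, eLpNorm (fun x => F (x, y)) p μ < ∞ := by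
  have hp' : 0 < p.toReal := ENNReal.toReal_pos hp₀ hp
  have h := (eLpNorm_eLpNorm_slice_left hp₀ hp hF.1).trans_lt hF.2
  simp only [eLpNorm_eq_lintegral_rpow_enorm_toReal hp₀ hp (f := fun y => eLpNorm _ p μ),
    enorm_eq_self, ENNReal.rpow_lt_top_iff_of_pos (one_div_pos.2 hp')] at h
  filter_upwards [ae_lt_top' ((aemeasurable_eLpNorm_slice_left hp₀ hp hF.1).pow_const _) h.ne]
    with y hy
  exact (ENNReal.rpow_lt_top_iff_of_pos hp').1 hy

theorem ae_eLpNorm_slice_right_lt_top (hp₀ : p ≠ 0) (hp : p ≠ ∞) (hF : MemLp F p (μ.prod ν)) :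
    ∀ᵐ x ∂μ, eLpNorm (fun y => F (x, y)) p ν < ∞ :=
  ae_eLpNorm_slice_left_lt_top (F := F ∘ Prod.swap) hp₀ hp
    (hF.comp_measurePreserving Measure.measurePreserving_swap)

theorem lintegral_eLpNorm_slice_left_mul_le {G : α × β → E}
    (hF : AEStronglyMeasurable F (μ.prod ν)) (hG : AEStronglyMeasurable G (μ.prod ν)) :
    ∫⁻ y, eLpNorm (fun x => F (x, y)) 2 μ * eLpNorm (fun x => G (x, y)) 2 μ ∂ν ≤
      eLpNorm F 2 (μ.prod ν) * eLpNorm G 2 (μ.prod ν) := by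
  rw [← eLpNorm_eLpNorm_slice_left two_ne_zero ENNReal.ofNat_ne_top hF,
    ← eLpNorm_eLpNorm_slice_left two_ne_zero ENNReal.ofNat_ne_top hG]
  exact lintegral_mul_le_eLpNorm_two_mul_eLpNorm_two
    (aemeasurable_eLpNorm_slice_left two_ne_zero ENNReal.ofNat_ne_top hF)
    (aemeasurable_eLpNorm_slice_left two_ne_zero ENNReal.ofNat_ne_top hG)

theorem lintegral_eLpNorm_slice_right_mul_le {G : α × β → E}
    (hF : AEStronglyMeasurable F (μ.prod ν)) (hG : AEStronglyMeasurable G (μ.prod ν)) :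
    ∫⁻ x, eLpNorm (fun y => F (x, y)) 2 ν * eLpNorm (fun y => G (x, y)) 2 ν ∂μ ≤
      eLpNorm F 2 (μ.prod ν) * eLpNorm G 2 (μ.prod ν) := by
  rw [← eLpNorm_eLpNorm_slice_right two_ne_zero ENNReal.ofNat_ne_top hF,
    ← eLpNorm_eLpNorm_slice_right two_ne_zero ENNReal.ofNat_ne_top hG]
  exact lintegral_mul_le_eLpNorm_two_mul_eLpNorm_two
    (aemeasurable_eLpNorm_slice_right two_ne_zero ENNReal.ofNat_ne_top hF)
    (aemeasurable_eLpNorm_slice_right two_ne_zero ENNReal.ofNat_ne_top hG)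

theorem lintegral_enorm_mul_mul_le_of_sq_le {F G H : α × β → ℝ} {φ : β → ℝ≥0∞} {ψ : α → ℝ≥0∞}
    (hG : StronglyMeasurable G) (hH : AEStronglyMeasurable H (μ.prod ν)) (hφ : AEMeasurable φ ν)
    (hF : ∀ᵐ y ∂ν, ∀ x, ‖F (x, y)‖ₑ ^ 2 ≤ φ y) (hGψ : ∀ᵐ x ∂μ, ∀ y, ‖G (x, y)‖ₑ ^ 2 ≤ ψ x) :
    ∫⁻ p, ‖F p * G p * H p‖ₑ ∂(μ.prod ν) ≤
      (∫⁻ y, φ y ∂ν) ^ (1/2 : ℝ) * (∫⁻ x, ψ x ∂μ) ^ (1/2 : ℝ) * eLpNorm H 2 (μ.prod ν) := by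
  wlog hHm : StronglyMeasurable H generalizing H
  · obtain ⟨H', hH'm, hHH'⟩ := hH
    calc _ = ∫⁻ p, ‖F p * G p * H' p‖ₑ ∂(μ.prod ν) :=
          lintegral_congr_ae (hHH'.mono fun p hp => by rw [hp])
      _ ≤ _ := this hH'm.aestronglyMeasurable hH'm
      _ = _ := by rw [eLpNorm_congr_ae hHH']
  set Ψ := ∫⁻ x, ψ x ∂μ
  have hHslice := aemeasurable_eLpNorm_slice_left two_ne_zero ENNReal.ofNat_ne_top hH
  have hφ' : AEMeasurable (fun y => φ y ^ (1/2 : ℝ)) ν := hφ.pow_const _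
  calc ∫⁻ p, ‖F p * G p * H p‖ₑ ∂(μ.prod ν)
      ≤ ∫⁻ y, ∫⁻ x, ‖F (x, y) * G (x, y) * H (x, y)‖ₑ ∂μ ∂ν := by
        rw [← lintegral_prod_swap]
        exact lintegral_prod_le _
    _ ≤ ∫⁻ y, φ y ^ (1/2 : ℝ) *
          (eLpNorm (fun x => G (x, y)) 2 μ * eLpNorm (fun x => H (x, y)) 2 μ) ∂ν :=
        lintegral_mono_ae <| hF.mono fun y hy => lintegral_enorm_mul_mul_le_of_enorm_sq_le
          (hG.comp_measurable measurable_prodMk_right).aestronglyMeasurable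
          (hHm.comp_measurable measurable_prodMk_right).aestronglyMeasurable hy
    _ ≤ ∫⁻ y, φ y ^ (1/2 : ℝ) * (Ψ ^ (1/2 : ℝ) * eLpNorm (fun x => H (x, y)) 2 μ) ∂ν := by
        gcongr with y
        exact eLpNorm_two_le_of_enorm_sq_le (hGψ.mono fun x hx => hx y)
    _ = Ψ ^ (1/2 : ℝ) * ∫⁻ y, φ y ^ (1/2 : ℝ) * eLpNorm (fun x => H (x, y)) 2 μ ∂ν := by
        rw [← lintegral_const_mul''
          (f := fun y => φ y ^ (1/2 : ℝ) * eLpNorm (fun x => H (x, y)) 2 μ) _ (hφ'.mul hHslice)]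
        congr 1 with y
        ring
    _ ≤ Ψ ^ (1/2 : ℝ) * (eLpNorm (fun y => φ y ^ (1/2 : ℝ)) 2 ν * eLpNorm H 2 (μ.prod ν)) := by
        rw [← eLpNorm_eLpNorm_slice_left two_ne_zero ENNReal.ofNat_ne_top hH]
        gcongr
        exact lintegral_mul_le_eLpNorm_two_mul_eLpNorm_two hφ' hHslice
    _ = _ := by
        rw [eLpNorm_two_eq_rpow_lintegral]
        simp only [enorm_eq_self, ← ENNReal.rpow_natCast, ← ENNReal.rpow_mul]
        norm_num
        ring

end Slices

theorem ENNReal.rpow_half_two_mul_mul_rpow_half_two_mul (a b c d : ℝ≥0∞) :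
    (2 * a * b) ^ (1/2 : ℝ) * (2 * c * d) ^ (1/2 : ℝ) =
      2 * a ^ (1/2 : ℝ) * b ^ (1/2 : ℝ) * c ^ (1/2 : ℝ) * d ^ (1/2 : ℝ) := by
  have h2 : (2 : ℝ≥0∞) ^ (1/2 : ℝ) * 2 ^ (1/2 : ℝ) = 2 := by
    rw [← ENNReal.rpow_add _ _ two_ne_zero ENNReal.ofNat_ne_top]
    norm_num
  simp only [ENNReal.mul_rpow_of_nonneg _ _ (one_div_nonneg.2 zero_le_two)]
  calc _ = ((2 : ℝ≥0∞) ^ (1/2 : ℝ) * 2 ^ (1/2 : ℝ)) * a ^ (1/2 : ℝ) * b ^ (1/2 : ℝ) *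
        c ^ (1/2 : ℝ) * d ^ (1/2 : ℝ) := by ring
    _ = _ := by rw [h2]

section Strip

variable {f g h : ℝ × ℝ → ℝ}

theorem periodic_osc (hPf : Per f) (y : ℝ) : Function.Periodic (fun x => osc f (x, y)) 1 :=
  fun x => by simp only [osc, hPf x y]

theorem intervalIntegral_osc_eq_zero (hf : Continuous f) (y : ℝ) :
    ∫ x in (0:ℝ)..1, osc f (x, y) = 0 := by
  have hfy : IntervalIntegrable (fun x => f (x, y)) volume 0 1 :=
    (by fun_prop : Continuous fun x => f (x, y)).intervalIntegrable 0 1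
  simp only [osc]
  rw [intervalIntegral.integral_sub hfy intervalIntegrable_const, intervalIntegral.integral_const]
  simp [havg]

theorem ae_forall_enorm_osc_sq_le_pd1 (hPf : Per f) (hf : Differentiable ℝ f)
    (hf₁ : MemLp (pd1 (osc f)) 2 μΩ) :
    ∀ᵐ y, ∀ x, ‖osc f (x, y)‖ₑ ^ 2 ≤
      2 * eLpNorm (fun x => osc f (x, y)) 2 (volume.restrict (Ioc 0 1)) *
        eLpNorm (fun x => pd1 (osc f) (x, y)) 2 (volume.restrict (Ioc 0 1)) := by
  filter_upwards [ae_eLpNorm_slice_left_lt_top two_ne_zero ENNReal.ofNat_ne_top hf₁] with y hy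
  have hu : Differentiable ℝ fun x => osc f (x, y) := by
    simp only [osc]
    fun_prop
  exact enorm_sq_le_two_mul_eLpNorm_mul_eLpNorm_deriv_of_periodic hu (periodic_osc hPf y)
    (intervalIntegral_osc_eq_zero hf.continuous y) ⟨(measurable_deriv _).aestronglyMeasurable, hy⟩

theorem ae_forall_enorm_sq_le_pd2 (hg : Differentiable ℝ g) (hg₀ : MemLp g 2 μΩ)
    (hg₂ : MemLp (pd2 g) 2 μΩ) :
    ∀ᵐ x ∂(volume.restrict (Ioc 0 1)), ∀ y, ‖g (x, y)‖ₑ ^ 2 ≤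
      2 * eLpNorm (fun y => g (x, y)) 2 * eLpNorm (fun y => pd2 g (x, y)) 2 := by
  filter_upwards [ae_eLpNorm_slice_right_lt_top two_ne_zero ENNReal.ofNat_ne_top hg₀,
    ae_eLpNorm_slice_right_lt_top two_ne_zero ENNReal.ofNat_ne_top hg₂] with x hx₀ hx₂
  have hw : Differentiable ℝ fun y => g (x, y) :=
    hg.comp ((differentiable_const x).prodMk differentiable_id)
  exact enorm_sq_le_two_mul_eLpNorm_mul_eLpNorm_deriv hw
    ⟨hw.continuous.aestronglyMeasurable, hx₀⟩ ⟨(measurable_deriv _).aestronglyMeasurable, hx₂⟩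

theorem lintegral_enorm_osc_mul_mul_le (hPf : Per f) (hf : Differentiable ℝ f)
    (hg : Differentiable ℝ g) (hf₀ : AEStronglyMeasurable (osc f) μΩ)
    (hf₁ : MemLp (pd1 (osc f)) 2 μΩ) (hg₀ : MemLp g 2 μΩ) (hg₂ : MemLp (pd2 g) 2 μΩ)
    (hh : AEStronglyMeasurable h μΩ) :
    ∫⁻ p, ‖osc f p * g p * h p‖ₑ ∂μΩ ≤
      2 * eLpNorm (osc f) 2 μΩ ^ (1/2 : ℝ) * eLpNorm (pd1 (osc f)) 2 μΩ ^ (1/2 : ℝ) *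
        eLpNorm g 2 μΩ ^ (1/2 : ℝ) * eLpNorm (pd2 g) 2 μΩ ^ (1/2 : ℝ) * eLpNorm h 2 μΩ := by
  have hφ : AEMeasurable (fun y =>
      2 * eLpNorm (fun x => osc f (x, y)) 2 (volume.restrict (Ioc 0 1)) *
        eLpNorm (fun x => pd1 (osc f) (x, y)) 2 (volume.restrict (Ioc 0 1))) volume :=
    ((aemeasurable_eLpNorm_slice_left two_ne_zero ENNReal.ofNat_ne_top hf₀).const_mul 2).mul
      (aemeasurable_eLpNorm_slice_left two_ne_zero ENNReal.ofNat_ne_top hf₁.1)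
  calc ∫⁻ p, ‖osc f p * g p * h p‖ₑ ∂μΩ
      ≤ (2 * eLpNorm (osc f) 2 μΩ * eLpNorm (pd1 (osc f)) 2 μΩ) ^ (1/2 : ℝ) *
          (2 * eLpNorm g 2 μΩ * eLpNorm (pd2 g) 2 μΩ) ^ (1/2 : ℝ) * eLpNorm h 2 μΩ := by
        refine (lintegral_enorm_mul_mul_le_of_sq_le hg.continuous.stronglyMeasurable hh hφ
          (ae_forall_enorm_osc_sq_le_pd1 hPf hf hf₁)
          (ae_forall_enorm_sq_le_pd2 hg hg₀ hg₂)).trans ?_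
        simp only [mul_assoc]
        rw [lintegral_const_mul' _ _ ENNReal.ofNat_ne_top,
          lintegral_const_mul' _ _ ENNReal.ofNat_ne_top]
        unfold μΩ
        gcongr
        · exact lintegral_eLpNorm_slice_left_mul_le hf₀ hf₁.1
        · exact lintegral_eLpNorm_slice_right_mul_le hg₀.1 hg₂.1
    _ = _ := by rw [ENNReal.rpow_half_two_mul_mul_rpow_half_two_mul]

end Strip

/-- Anisotropic bound on the triple product with the oscillation part `f̃`:
`|∫ f̃ g h| ≤ C ‖f̃‖^{1/2} ‖∂₁f̃‖^{1/2} ‖g‖^{1/2} ‖∂₂g‖^{1/2} ‖h‖`. -/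
theorem stmt9 : ∃ C : ℝ, 0 < C ∧ ∀ f g h : ℝ × ℝ → ℝ,
    Per f → Per g → Per h → Differentiable ℝ f → Differentiable ℝ g →
    MemLp (osc f) 2 μΩ → MemLp (pd1 (osc f)) 2 μΩ →
    MemLp g 2 μΩ → MemLp (pd2 g) 2 μΩ → MemLp h 2 μΩ →
    |∫ p, osc f p * g p * h p ∂μΩ| ≤
      C * (eLpNorm (osc f) 2 μΩ).toReal ^ (1/2 : ℝ) *
        (eLpNorm (pd1 (osc f)) 2 μΩ).toReal ^ (1/2 : ℝ) *
        (eLpNorm g 2 μΩ).toReal ^ (1/2 : ℝ) * (eLpNorm (pd2 g) 2 μΩ).toReal ^ (1/2 : ℝ) *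
        (eLpNorm h 2 μΩ).toReal := by
  refine ⟨2, two_pos, fun f g h hPf _ _ hf hg hf₀ hf₁ hg₀ hg₂ hh => ?_⟩
  calc |∫ p, osc f p * g p * h p ∂μΩ| = ‖∫ p, osc f p * g p * h p ∂μΩ‖ₑ.toReal := by simp
    _ ≤ (2 * eLpNorm (osc f) 2 μΩ ^ (1/2 : ℝ) * eLpNorm (pd1 (osc f)) 2 μΩ ^ (1/2 : ℝ) *
          eLpNorm g 2 μΩ ^ (1/2 : ℝ) * eLpNorm (pd2 g) 2 μΩ ^ (1/2 : ℝ) *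
            eLpNorm h 2 μΩ).toReal :=
      ENNReal.toReal_mono (by finiteness [hf₀.2, hf₁.2, hg₀.2, hg₂.2, hh.2])
        ((enorm_integral_le_lintegral_enorm _).trans
          (lintegral_enorm_osc_mul_mul_le hPf hf hg hf₀.1 hf₁ hg₀ hg₂ hh.1))
    _ = _ := by simp [ENNReal.toReal_rpow]
end

section
/- There is a constant C > 0 such that for any f ∈ H²(𝕋 × ℝ) with zero horizontal average (f̄ = 0), one has ‖f‖_{L^∞(Ω)} ≤ C ‖f‖_{L²}^{1/4} ‖∂₁f‖_{L²}^{1/4} ‖∂₂f‖_{L²}^{1/4} ‖∂₁∂₂f‖_{L²}^{1/4}. -/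
open MeasureTheory Real

/-!
For fixed `y` the row `t ↦ f (t, y)` is periodic with mean zero, so it vanishes somewhere in
every period, and the fundamental theorem of calculus with Cauchy–Schwarz gives
`f (x, y) ^ 4 ≤ 4 ‖f (·, y)‖² ‖∂₁f (·, y)‖²` in `L²(𝕋)`. The squared row norms are controlled
vertically: `y ↦ ‖u (·, y)‖²` varies by at most `2 ∫_Ω |u ∂₂u|` and is integrable over `ℝ`, hence
is bounded by `2 ‖u‖ ‖∂₂u‖`. Applied to `u = f` and to `u = ∂₁f` (using `∂₂∂₁f = ∂₁∂₂f`) this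
yields `|f| ≤ 2 (‖f‖ ‖∂₁f‖ ‖∂₂f‖ ‖∂₁∂₂f‖)^{1/4}`.
-/

open Set

section PartialDerivatives

variable {f : ℝ × ℝ → ℝ}

lemma hasDerivAt_pd1 (hf : Differentiable ℝ f) (x y : ℝ) :
    HasDerivAt (fun t => f (t, y)) (pd1 f (x, y)) x :=
  (hf.comp (differentiable_id.prodMk (differentiable_const y)) x).hasDerivAt

lemma hasDerivAt_pd2 (hf : Differentiable ℝ f) (x y : ℝ) :
    HasDerivAt (fun t => f (x, t)) (pd2 f (x, y)) y :=
  (hf.comp ((differentiable_const x).prodMk differentiable_id) y).hasDerivAt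

lemma pd1_eq_fderiv (hf : Differentiable ℝ f) : pd1 f = fun p => fderiv ℝ f p (1, 0) := by
  funext p
  have h := (hf p).hasFDerivAt.comp_hasDerivAt p.1
    ((hasDerivAt_id p.1).prodMk (hasDerivAt_const p.1 p.2))
  exact h.deriv

lemma pd2_eq_fderiv (hf : Differentiable ℝ f) : pd2 f = fun p => fderiv ℝ f p (0, 1) := by
  funext p
  have h := (hf p).hasFDerivAt.comp_hasDerivAt p.2
    ((hasDerivAt_const p.2 p.1).prodMk (hasDerivAt_id p.2))
  exact h.deriv

lemma ContDiff.pd1 {m n : WithTop ℕ∞} (hf : ContDiff ℝ n f) (hmn : m + 1 ≤ n) :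
    ContDiff ℝ m (pd1 f) := by
  rw [pd1_eq_fderiv ((hf.of_le (le_trans le_add_self hmn)).differentiable one_ne_zero)]
  exact (ContinuousLinearMap.apply ℝ ℝ ((1 : ℝ), (0 : ℝ))).contDiff.comp (hf.fderiv_right hmn)

lemma ContDiff.pd2 {m n : WithTop ℕ∞} (hf : ContDiff ℝ n f) (hmn : m + 1 ≤ n) :
    ContDiff ℝ m (pd2 f) := by
  rw [pd2_eq_fderiv ((hf.of_le (le_trans le_add_self hmn)).differentiable one_ne_zero)]
  exact (ContinuousLinearMap.apply ℝ ℝ ((0 : ℝ), (1 : ℝ))).contDiff.comp (hf.fderiv_right hmn)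

lemma fderiv_fderiv_apply (hf : ContDiff ℝ 2 f) (p v w : ℝ × ℝ) :
    fderiv ℝ (fun q => fderiv ℝ f q v) p w = fderiv ℝ (fderiv ℝ f) p w v := by
  have hd : DifferentiableAt ℝ (fderiv ℝ f) p :=
    (hf.fderiv_right (m := 1) le_rfl).differentiable one_ne_zero p
  rw [fderiv_clm_apply hd (differentiableAt_const v)]
  simp

lemma pd2_pd1 (hf : ContDiff ℝ 2 f) : pd2 (pd1 f) = pd1 (pd2 f) := by
  have hf1 : Differentiable ℝ f := hf.differentiable two_ne_zero
  rw [pd2_eq_fderiv ((hf.pd1 le_rfl).differentiable one_ne_zero),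
    pd1_eq_fderiv ((hf.pd2 le_rfl).differentiable one_ne_zero), pd1_eq_fderiv hf1,
    pd2_eq_fderiv hf1]
  funext p
  rw [fderiv_fderiv_apply hf, fderiv_fderiv_apply hf,
    (hf.contDiffAt.isSymmSndFDerivAt (by simp)).eq]

end PartialDerivatives

section L2

variable {α : Type*} [MeasurableSpace α] {μ : Measure α} {u w : α → ℝ}

lemma toReal_eLpNorm_two_sq (hu : MemLp u 2 μ) :
    (eLpNorm u 2 μ).toReal ^ 2 = ∫ a, u a ^ 2 ∂μ := by
  rw [hu.eLpNorm_eq_integral_rpow_norm two_ne_zero ENNReal.ofNat_ne_top,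
    ENNReal.toReal_ofReal (by positivity), ← Real.rpow_natCast, ← Real.rpow_mul (by positivity)]
  simp

lemma integral_abs_mul_le_toReal_eLpNorm_mul (hu : MemLp u 2 μ) (hw : MemLp w 2 μ) :
    ∫ a, |u a * w a| ∂μ ≤ (eLpNorm u 2 μ).toReal * (eLpNorm w 2 μ).toReal := by
  have h := integral_mul_norm_le_Lp_mul_Lq (p := 2) (q := 2) (μ := μ) Real.HolderConjugate.two_two
    (by simpa using hu) (by simpa using hw)
  have hsqrt (v : α → ℝ) (hv : MemLp v 2 μ) :
      (∫ a, v a ^ 2 ∂μ) ^ (2⁻¹ : ℝ) = (eLpNorm v 2 μ).toReal := by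
    rw [← toReal_eLpNorm_two_sq hv, ← Real.rpow_natCast, ← Real.rpow_mul ENNReal.toReal_nonneg]
    norm_num
  simpa [hsqrt u hu, hsqrt w hw, abs_mul] using h

lemma sq_integral_abs_mul_le (hu : MemLp u 2 μ) (hw : MemLp w 2 μ) :
    (∫ a, |u a * w a| ∂μ) ^ 2 ≤ (∫ a, u a ^ 2 ∂μ) * ∫ a, w a ^ 2 ∂μ := by
  rw [← toReal_eLpNorm_two_sq hu, ← toReal_eLpNorm_two_sq hw, ← mul_pow]
  gcongr
  exact integral_abs_mul_le_toReal_eLpNorm_mul hu hw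

end L2

lemma Continuous.memLp_restrict_Ioc {g : ℝ → ℝ} (hg : Continuous g) (p : ENNReal) (a b : ℝ) :
    MemLp g p (volume.restrict (Ioc a b)) := by
  obtain ⟨C, hC⟩ := (isCompact_Icc (a := a) (b := b)).exists_bound_of_continuousOn hg.continuousOn
  exact .of_bound hg.aestronglyMeasurable C
    ((ae_restrict_iff' measurableSet_Ioc).2 (.of_forall fun t ht => hC t (Ioc_subset_Icc_self ht)))

section OneVariable

variable {g g' : ℝ → ℝ}

lemma sq_le_sq_add_two_mul_integral_abs_mul (hg : ∀ t, HasDerivAt g (g' t) t)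
    (hg' : Continuous g') (a b : ℝ) :
    g b ^ 2 ≤ g a ^ 2 + 2 * ∫ t in uIoc a b, |g t * g' t| := by
  have hcont : Continuous g := continuous_iff_continuousAt.2 fun t => (hg t).continuousAt
  have hftc : ∫ t in a..b, 2 * (g t * g' t) = g b ^ 2 - g a ^ 2 := by
    refine intervalIntegral.integral_eq_sub_of_hasDerivAt (f := fun t => g t ^ 2) (fun t _ => ?_)
      ((continuous_const.mul (hcont.mul hg')).intervalIntegrable a b)
    simpa [mul_assoc] using (hg t).fun_pow 2
  have habs := intervalIntegral.norm_integral_le_integral_norm_uIoc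
    (f := fun t => 2 * (g t * g' t)) (a := a) (b := b) (μ := volume)
  simp only [Real.norm_eq_abs, abs_mul, abs_two] at habs
  rw [hftc, integral_const_mul] at habs
  simp only [abs_mul]
  linarith [le_abs_self (g b ^ 2 - g a ^ 2)]

lemma Function.Periodic.periodic_of_hasDerivAt {T : ℝ} (hper : Function.Periodic g T)
    (hg : ∀ t, HasDerivAt g (g' t) t) : Function.Periodic g' T := fun t => by
  have h := (hg (t + T)).comp_add_const t T
  rw [show (fun s => g (s + T)) = g from funext hper] at h
  exact h.unique (hg t)

lemma exists_zero_of_intervalIntegral_eq_zero (hg : Continuous g) {a b : ℝ} (hab : a ≠ b)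
    (h : ∫ t in a..b, g t = 0) : ∃ c ∈ uIoo a b, g c = 0 := by
  obtain ⟨c, hc, hgc⟩ := exists_eq_interval_average hab hg.continuousOn
  exact ⟨c, hc, by rw [hgc, interval_average_eq, h, smul_zero]⟩

lemma sq_le_two_mul_integral_abs_mul_of_periodic {T : ℝ} (hT : 0 < T)
    (hg : ∀ t, HasDerivAt g (g' t) t) (hg' : Continuous g') (hper : Function.Periodic g T)
    (hmean : ∫ t in (0 : ℝ)..T, g t = 0) (x : ℝ) :
    g x ^ 2 ≤ 2 * ∫ t in Ioc 0 T, |g t * g' t| := by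
  have hcont : Continuous g := continuous_iff_continuousAt.2 fun t => (hg t).continuousAt
  have hprod : Continuous fun t => |g t * g' t| := (hcont.mul hg').abs
  have hprod_per : Function.Periodic (fun t => |g t * g' t|) T := fun t => by
    simp only [hper t, hper.periodic_of_hasDerivAt hg t]
  obtain ⟨c, hc, hgc⟩ : ∃ c ∈ uIoo (x - T) x, g c = 0 := by
    refine exists_zero_of_intervalIntegral_eq_zero hcont (by linarith) ?_
    simpa using (hper.intervalIntegral_add_eq (x - T) 0).trans (by simpa using hmean)
  rw [uIoo_of_le (by linarith)] at hc
  have hsub : uIoc c x ⊆ Ioc (x - T) x := by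
    rw [uIoc_of_le hc.2.le]
    exact Ioc_subset_Ioc_left hc.1.le
  calc g x ^ 2 ≤ g c ^ 2 + 2 * ∫ t in uIoc c x, |g t * g' t| :=
        sq_le_sq_add_two_mul_integral_abs_mul hg hg' c x
    _ ≤ 2 * ∫ t in Ioc (x - T) x, |g t * g' t| := by
        rw [hgc, zero_pow two_ne_zero, zero_add]
        gcongr 2 * ?_
        exact setIntegral_mono_set hprod.integrableOn_Ioc
          (.of_forall fun t => abs_nonneg _) hsub.eventuallyLE
    _ = 2 * ∫ t in Ioc 0 T, |g t * g' t| := by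
        rw [← intervalIntegral.integral_of_le (by linarith),
          ← intervalIntegral.integral_of_le hT.le]
        simpa using hprod_per.intervalIntegral_add_eq (x - T) 0

end OneVariable

lemma MeasureTheory.Integrable.exists_lt_of_measure_univ_eq_top {α : Type*} [MeasurableSpace α]
    {μ : Measure α} {h : α → ℝ} (hh : Integrable h μ) (hμ : μ univ = ⊤) {ε : ℝ} (hε : 0 < ε) :
    ∃ a, h a < ε := by
  by_contra! hle
  have hconst : Integrable (fun _ : α => ε) μ := hh.mono' aestronglyMeasurable_const
    (.of_forall fun a => by rw [Real.norm_eq_abs, abs_of_pos hε]; exact hle a)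
  obtain hε0 | hfin := integrable_const_iff.1 hconst
  · exact hε.ne' hε0
  · exact measure_ne_top μ univ hμ

section Strip

variable {u w : ℝ × ℝ → ℝ}

lemma integral_slice_sq_le_add (hu : Continuous u) (hw : Continuous w)
    (hder : ∀ x t, HasDerivAt (fun s => u (x, s)) (w (x, t)) t)
    (huw : Integrable (fun p => |u p * w p|) μΩ) (y y₂ : ℝ) :
    ∫ x in Ioc (0 : ℝ) 1, u (x, y) ^ 2 ≤
      (∫ x in Ioc (0 : ℝ) 1, u (x, y₂) ^ 2) + 2 * ∫ p, |u p * w p| ∂μΩ := by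
  set J := uIoc y₂ y
  have hrestrict : (volume.restrict (Ioc (0 : ℝ) 1)).prod (volume.restrict J) =
      μΩ.restrict (univ ×ˢ J) := by
    rw [μΩ, ← Measure.prod_restrict, Measure.restrict_univ]
  have hbox : Integrable (fun p => |u p * w p|)
      ((volume.restrict (Ioc (0 : ℝ) 1)).prod (volume.restrict J)) := by
    rw [hrestrict]; exact huw.restrict
  have hslice (s : ℝ) : IntegrableOn (fun x => u (x, s) ^ 2) (Ioc 0 1) :=
    ((hu.comp (continuous_id.prodMk continuous_const)).pow 2).integrableOn_Ioc
  have hinner := hbox.integral_prod_left.const_mul 2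
  calc ∫ x in Ioc (0 : ℝ) 1, u (x, y) ^ 2
      ≤ ∫ x in Ioc (0 : ℝ) 1, (u (x, y₂) ^ 2 + 2 * ∫ t in J, |u (x, t) * w (x, t)|) :=
        integral_mono (hslice y) ((hslice y₂).fun_add hinner) fun x =>
          sq_le_sq_add_two_mul_integral_abs_mul (hder x)
            (hw.comp (continuous_const.prodMk continuous_id)) y₂ y
    _ = (∫ x in Ioc (0 : ℝ) 1, u (x, y₂) ^ 2) + 2 * ∫ p in univ ×ˢ J, |u p * w p| ∂μΩ := by
        rw [integral_add (hslice y₂) hinner, integral_const_mul, integral_integral hbox,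
          hrestrict]
    _ ≤ (∫ x in Ioc (0 : ℝ) 1, u (x, y₂) ^ 2) + 2 * ∫ p, |u p * w p| ∂μΩ := by
        have := setIntegral_le_integral (s := univ ×ˢ J) huw (.of_forall fun p => abs_nonneg _)
        linarith

lemma integral_slice_sq_le (hu : Continuous u) (hw : Continuous w)
    (hder : ∀ x t, HasDerivAt (fun s => u (x, s)) (w (x, t)) t)
    (hu2 : MemLp u 2 μΩ) (hw2 : MemLp w 2 μΩ) (y : ℝ) :
    ∫ x in Ioc (0 : ℝ) 1, u (x, y) ^ 2 ≤ 2 * ∫ p, |u p * w p| ∂μΩ := by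
  have hA : Integrable fun s => ∫ x in Ioc (0 : ℝ) 1, u (x, s) ^ 2 :=
    hu2.integrable_sq.integral_prod_right
  -- the integrable function `y₂ ↦ ‖u (·, y₂)‖²` takes arbitrarily small values
  refine le_of_forall_pos_le_add fun ε hε => ?_
  obtain ⟨y₂, hy₂⟩ := hA.exists_lt_of_measure_univ_eq_top Real.volume_univ hε
  linarith [integral_slice_sq_le_add hu hw hder (hu2.integrable_mul hw2).abs y y₂]

lemma integral_slice_sq_le_two_mul_eLpNorm (hu : Continuous u) (hw : Continuous w)
    (hder : ∀ x t, HasDerivAt (fun s => u (x, s)) (w (x, t)) t)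
    (hu2 : MemLp u 2 μΩ) (hw2 : MemLp w 2 μΩ) (y : ℝ) :
    ∫ x in Ioc (0 : ℝ) 1, u (x, y) ^ 2 ≤
      2 * ((eLpNorm u 2 μΩ).toReal * (eLpNorm w 2 μΩ).toReal) := by
  grw [integral_slice_sq_le hu hw hder hu2 hw2 y, integral_abs_mul_le_toReal_eLpNorm_mul hu2 hw2]

end Strip

lemma abs_le_two_mul_rpow_of_pow_four_le {a Q : ℝ} (hQ : 0 ≤ Q) (h : a ^ 4 ≤ 16 * Q) :
    |a| ≤ 2 * Q ^ (1 / 4 : ℝ) := by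
  have hQ4 : (2 * Q ^ (1 / 4 : ℝ)) ^ 4 = 16 * Q := by
    rw [mul_pow, ← Real.rpow_natCast (Q ^ _), ← Real.rpow_mul hQ]
    norm_num
  rw [← pow_le_pow_iff_left₀ (abs_nonneg a) (by positivity) four_ne_zero, hQ4, pow_abs,
    abs_of_nonneg (by positivity)]
  exact h

lemma pow_four_le_of_havg_eq_zero {f : ℝ × ℝ → ℝ} (hper : Per f) (hf : ContDiff ℝ 2 f)
    (h0 : ∀ y, havg f y = 0) (hm0 : MemLp f 2 μΩ) (hm1 : MemLp (pd1 f) 2 μΩ)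
    (hm2 : MemLp (pd2 f) 2 μΩ) (hm12 : MemLp (pd1 (pd2 f)) 2 μΩ) (x y : ℝ) :
    f (x, y) ^ 4 ≤ 16 * ((eLpNorm f 2 μΩ).toReal * (eLpNorm (pd1 f) 2 μΩ).toReal *
      (eLpNorm (pd2 f) 2 μΩ).toReal * (eLpNorm (pd1 (pd2 f)) 2 μΩ).toReal) := by
  have hd : Differentiable ℝ f := hf.differentiable two_ne_zero
  have hd1 : Differentiable ℝ (pd1 f) := (hf.pd1 (m := 1) le_rfl).differentiable one_ne_zero
  have hc1 : Continuous (pd1 f) := hd1.continuous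
  have hc2 : Continuous (pd2 f) := (hf.pd2 (m := 1) le_rfl).continuous
  have hc12 : Continuous (pd1 (pd2 f)) := ((hf.pd2 (m := 1) le_rfl).pd1 (m := 0) le_rfl).continuous
  have hrow : Continuous fun t : ℝ => (t, y) := continuous_id.prodMk continuous_const
  set g := fun t => f (t, y)
  set g' := fun t => pd1 f (t, y)
  have hx : f (x, y) ^ 2 ≤ 2 * ∫ t in Ioc (0 : ℝ) 1, |g t * g' t| :=
    sq_le_two_mul_integral_abs_mul_of_periodic one_pos (fun t => hasDerivAt_pd1 hd t y)
      (hc1.comp hrow) (fun t => hper t y) (h0 y) x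
  have hcs := sq_integral_abs_mul_le ((hf.continuous.comp hrow).memLp_restrict_Ioc 2 0 1)
    ((hc1.comp hrow).memLp_restrict_Ioc 2 0 1)
  have hg := integral_slice_sq_le_two_mul_eLpNorm hf.continuous hc2 (hasDerivAt_pd2 hd) hm0 hm2 y
  have hg' := integral_slice_sq_le_two_mul_eLpNorm hc1 hc12
    (by simpa only [pd2_pd1 hf] using hasDerivAt_pd2 hd1) hm1 hm12 y
  calc f (x, y) ^ 4 = (f (x, y) ^ 2) ^ 2 := by ring
    _ ≤ (2 * ∫ t in Ioc (0 : ℝ) 1, |g t * g' t|) ^ 2 := by gcongr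
    _ ≤ 4 * ((∫ t in Ioc (0 : ℝ) 1, g t ^ 2) * ∫ t in Ioc (0 : ℝ) 1, g' t ^ 2) := by
        rw [mul_pow]
        gcongr
        · norm_num
        · exact hcs
    _ ≤ _ := by
        grw [hg, hg']
        exact le_of_eq (by ring)

/-- Anisotropic `L^∞` bound for functions with zero horizontal average:
`‖f‖_{L^∞} ≤ C ‖f‖^{1/4} ‖∂₁f‖^{1/4} ‖∂₂f‖^{1/4} ‖∂₁∂₂f‖^{1/4}`. -/
theorem stmt10 : ∃ C : ℝ, 0 < C ∧ ∀ f : ℝ × ℝ → ℝ,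
    Per f → ContDiff ℝ 2 f → (∀ y, havg f y = 0) →
    MemLp f 2 μΩ → MemLp (pd1 f) 2 μΩ → MemLp (pd2 f) 2 μΩ →
    MemLp (pd1 (pd2 f)) 2 μΩ →
    eLpNorm f ⊤ μΩ ≤ ENNReal.ofReal
      (C * (eLpNorm f 2 μΩ).toReal ^ (1/4 : ℝ) *
        (eLpNorm (pd1 f) 2 μΩ).toReal ^ (1/4 : ℝ) *
        (eLpNorm (pd2 f) 2 μΩ).toReal ^ (1/4 : ℝ) *
        (eLpNorm (pd1 (pd2 f)) 2 μΩ).toReal ^ (1/4 : ℝ)) := by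
  refine ⟨2, two_pos, fun f hper hf h0 hm0 hm1 hm2 hm12 => ?_⟩
  have hbound (p : ℝ × ℝ) := abs_le_two_mul_rpow_of_pow_four_le (by positivity)
    (pow_four_le_of_havg_eq_zero hper hf h0 hm0 hm1 hm2 hm12 p.1 p.2)
  rw [eLpNorm_exponent_top]
  refine (eLpNormEssSup_le_of_ae_bound (.of_forall hbound)).trans_eq ?_
  rw [Real.mul_rpow (by positivity) (by positivity), Real.mul_rpow (by positivity) (by positivity),
    Real.mul_rpow (by positivity) (by positivity)]
  ring_nf
end
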